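/- Fix τ ∈ ℂ with Im τ > 0, v ∈ ℂ, integers m ≥ 1 and N ≥ 1, and integers a, b with 0 ≤ a, b ≤ m−1. Set z₀ = (−v + a + bτ)/m and assume θ(z₀, τ) ≠ 0 and θ(v + z₀, τ) ≠ 0. Then for all sufficiently small ε > 0, ∮_{|z−z₀|=ε} θ(mz,τ)/θ(v+mz,τ) · (θ(v+z,τ)/θ(z,τ))^N dz = (e^{2πibv}/m) · G(e^{2πiv}, e^{2πiτ}) · (θ(v+z₀,τ)/θ(z₀,τ))^N. -/

import Mathlib

open Complex

/-- The Jacobi theta function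
`θ(v,τ) = i·e^{πiτ/4}·e^{−πiv}·∏_{k≥1}(1−q^k)(1−q^{k−1}e^{2πiv})(1−q^k e^{−2πiv})`,
where `q = e^{2πiτ}`. -/
noncomputable def theta (v τ : ℂ) : ℂ :=
  I * exp ((Real.pi : ℂ) * I * τ / 4) * exp (-((Real.pi : ℂ) * I * v)) *
    ∏' k : ℕ,
      (1 - exp (2 * (Real.pi : ℂ) * I * τ) ^ (k + 1)) *
      (1 - exp (2 * (Real.pi : ℂ) * I * τ) ^ k * exp (2 * (Real.pi : ℂ) * I * v)) *
      (1 - exp (2 * (Real.pi : ℂ) * I * τ) ^ (k + 1) * exp (-(2 * (Real.pi : ℂ) * I * v)))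

/-- `G(y, q) = y^{-1/2}·∏_{k≥1}(1−yq^{k−1})(1−y⁻¹q^k)/(1−q^k)²`, written as a
function of `v` and `τ` with `y = e^{2πiv}`, `q = e^{2πiτ}`,
`y^{-1/2} = e^{−πiv}`. -/
noncomputable def Gfun (v τ : ℂ) : ℂ :=
  exp (-((Real.pi : ℂ) * I * v)) *
    ∏' k : ℕ,
      (1 - exp (2 * (Real.pi : ℂ) * I * v) * exp (2 * (Real.pi : ℂ) * I * τ) ^ k) *
        (1 - (exp (2 * (Real.pi : ℂ) * I * v))⁻¹ * exp (2 * (Real.pi : ℂ) * I * τ) ^ (k + 1)) /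
        (1 - exp (2 * (Real.pi : ℂ) * I * τ) ^ (k + 1)) ^ 2

/-!
With `q = e^{2πiτ}` and `y = e^{2πiv}`, the product formula writes `θ(v,τ)` as a nonzero constant
times `e^{−πiv}(1−y)(yq;q)_∞(y⁻¹q;q)_∞`. Hence `θ(·,τ)` is entire and odd, `θ(v+1) = −θ(v)`,
`θ(v+τ) = −e^{−πiτ}e^{−2πiv}θ(v)`, `θ` has a simple zero at `0`, and `θ'(0)·G(y,q) = −2πi·θ(v)`.

Since `v + m z₀ = a + bτ`, the denominator `θ(v+mz)` has a simple zero at `z₀`, while the rest of the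
integrand is holomorphic near `z₀` because `θ(z₀) ≠ 0`. So the integral over a small circle is
`2πi·θ(mz₀)·(θ(v+z₀)/θ(z₀))^N / (m·θ'(a+bτ))`. Quasi-periodicity gives
`θ(mz₀) = θ(−v+a+bτ) = −c·e^{2πibv}·θ(v)` and `θ'(a+bτ) = c·θ'(0)` with the same factor
`c = (−1)^{a+b}e^{−πib²τ}`, which cancels and leaves `e^{2πibv}/m · G · (θ(v+z₀)/θ(z₀))^N`.
-/

open Filter Topology
open scoped Real

theorem eventually_circleIntegral_div_eq_of_hasDerivAt {f g : ℂ → ℂ} {c d : ℂ}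
    (hf : ∀ᶠ z in 𝓝 c, DifferentiableAt ℂ f z) (hg : ∀ᶠ z in 𝓝 c, DifferentiableAt ℂ g z)
    (hfc : f c = 0) (hfd : HasDerivAt f d c) (hd : d ≠ 0) :
    ∀ᶠ ε in 𝓝[>] (0 : ℝ), (∮ z in C(c, ε), g z / f z) = 2 * π * I * (g c / d) := by
  set φ := dslope f c
  have hfφ : ∀ z, f z = (z - c) * φ z := fun z => by
    simpa [hfc] using (sub_smul_dslope f c z).symm
  have hφc : φ c = d := by rw [← hfd.deriv]; exact dslope_same f c
  have hφ : ∀ᶠ z in 𝓝 c, DifferentiableAt ℂ φ z := by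
    obtain ⟨r, hr, hball⟩ := Metric.eventually_nhds_iff_ball.1 hf
    have hφr : DifferentiableOn ℂ φ (Metric.ball c r) :=
      (Complex.differentiableOn_dslope (Metric.ball_mem_nhds c hr)).2
        fun z hz => (hball z hz).differentiableWithinAt
    filter_upwards [Metric.ball_mem_nhds c hr] with z hz
    exact hφr.differentiableAt (Metric.isOpen_ball.mem_nhds hz)
  have hφ0 : ∀ᶠ z in 𝓝 c, φ z ≠ 0 :=
    (hφ.self_of_nhds.continuousAt.eventually_ne (hφc ▸ hd))
  obtain ⟨r, hr, hball⟩ := Metric.eventually_nhds_iff_ball.1 (hg.and (hφ.and hφ0))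
  filter_upwards [Ioo_mem_nhdsGT hr] with ε ⟨hε, hεr⟩
  have hG : DiffContOnCl ℂ (fun z => g z / φ z) (Metric.ball c ε) := by
    refine DifferentiableOn.diffContOnCl fun z hz => ?_
    rw [closure_ball c hε.ne'] at hz
    obtain ⟨hgz, hφz, hφz0⟩ := hball z (Metric.closedBall_subset_ball hεr hz)
    exact (hgz.div hφz hφz0).differentiableWithinAt
  have hsphere : Set.EqOn (fun z => g z / f z) (fun z => (z - c)⁻¹ • (g z / φ z))
      (Metric.sphere c ε) := fun z hz => by
    have hzc : z - c ≠ 0 := sub_ne_zero.2 (Metric.ne_of_mem_sphere hz hε.ne')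
    simp only [hfφ z, smul_eq_mul]
    field_simp
  rw [circleIntegral.integral_congr hε.le hsphere,
    hG.circleIntegral_sub_inv_smul (Metric.mem_ball_self hε), hφc, smul_eq_mul]

/-- `qPochhammer q x = (xq; q)_∞`. -/
noncomputable def qPochhammer (q x : ℂ) : ℂ := ∏' k : ℕ, (1 - q ^ (k + 1) * x)

section qPochhammer

variable {q : ℂ}

lemma summable_norm_pow_succ_mul (hq : ‖q‖ < 1) (x : ℂ) :
    Summable fun k : ℕ => ‖q ^ (k + 1) * x‖ := by
  simpa [norm_mul, norm_pow] using
    ((summable_nat_add_iff 1).2 (summable_geometric_of_lt_one (norm_nonneg q) hq)).mul_right ‖x‖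

lemma multipliable_one_sub_pow_mul (hq : ‖q‖ < 1) (x : ℂ) :
    Multipliable fun k : ℕ => 1 - q ^ k * x := by
  simpa [sub_eq_add_neg] using
    multipliable_one_add_of_summable (f := fun k : ℕ => -(q ^ k * x))
      (by simpa [norm_mul, norm_pow] using
        (summable_geometric_of_lt_one (norm_nonneg q) hq).mul_right ‖x‖)

lemma multipliable_one_sub_pow_succ_mul (hq : ‖q‖ < 1) (x : ℂ) :
    Multipliable fun k : ℕ => 1 - q ^ (k + 1) * x := by
  simpa [sub_eq_add_neg] using
    multipliable_one_add_of_summable (f := fun k : ℕ => -(q ^ (k + 1) * x))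
      (by simpa using summable_norm_pow_succ_mul hq x)

lemma qPochhammer_ne_zero (hq : ‖q‖ < 1) {x : ℂ} (hx : ∀ k : ℕ, 1 - q ^ (k + 1) * x ≠ 0) :
    qPochhammer q x ≠ 0 := by
  simpa [qPochhammer, sub_eq_add_neg] using
    tprod_one_add_ne_zero_of_summable (f := fun k : ℕ => -(q ^ (k + 1) * x))
      (by simpa [sub_eq_add_neg] using hx) (by simpa using summable_norm_pow_succ_mul hq x)

lemma qPochhammer_one_ne_zero (hq : ‖q‖ < 1) : qPochhammer q 1 ≠ 0 := by
  refine qPochhammer_ne_zero hq fun k h => ?_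
  have : ‖q ^ (k + 1)‖ < 1 := by
    simpa [norm_pow] using pow_lt_one₀ (norm_nonneg q) hq k.succ_ne_zero
  rw [mul_one, sub_eq_zero] at h
  simp [← h] at this

lemma differentiable_qPochhammer (hq : ‖q‖ < 1) : Differentiable ℂ (qPochhammer q) := by
  intro x₀
  set R := ‖x₀‖ + 1
  have hprod : HasProdLocallyUniformlyOn (fun k x => 1 + -(q ^ (k + 1) * x))
      (fun x => ∏' k : ℕ, (1 + -(q ^ (k + 1) * x))) (Metric.ball 0 R) := by
    refine Summable.hasProdLocallyUniformlyOn_nat_one_add Metric.isOpen_ball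
      (summable_norm_pow_succ_mul hq R) (.of_forall fun k x hx => ?_) fun k => by fun_prop
    have hx : ‖x‖ ≤ ‖(R : ℂ)‖ := by
      rw [mem_ball_zero_iff] at hx
      simp only [Complex.norm_real, Real.norm_eq_abs]
      exact hx.le.trans (le_abs_self R)
    simpa [norm_mul] using mul_le_mul_of_nonneg_left hx (norm_nonneg (q ^ (k + 1)))
  have hdiff : DifferentiableOn ℂ (fun x => ∏' k : ℕ, (1 + -(q ^ (k + 1) * x)))
      (Metric.ball 0 R) :=
    hprod.differentiableOn (.of_forall fun s => by
      simpa [Finset.prod_fn] using DifferentiableOn.finsetProd fun _ _ => by fun_prop)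
      Metric.isOpen_ball
  simp only [← sub_eq_add_neg] at hdiff
  exact hdiff.differentiableAt (Metric.isOpen_ball.mem_nhds (by simp [R]))

lemma tprod_one_sub_pow_mul (hq : ‖q‖ < 1) (x : ℂ) :
    ∏' k : ℕ, (1 - q ^ k * x) = (1 - x) * qPochhammer q x := by
  rw [tprod_eq_zero_mul' (f := fun k : ℕ => 1 - q ^ k * x)
    (multipliable_one_sub_pow_succ_mul hq x), pow_zero, one_mul, qPochhammer]

lemma qPochhammer_eq_mul_qPochhammer_mul (hq : ‖q‖ < 1) (x : ℂ) :
    qPochhammer q x = (1 - q * x) * qPochhammer q (q * x) := by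
  have h := tprod_one_sub_pow_mul hq (q * x)
  simp only [← mul_assoc, ← pow_succ] at h
  rw [qPochhammer, h]

lemma qPochhammer_div (hq : ‖q‖ < 1) (hq0 : q ≠ 0) (x : ℂ) :
    qPochhammer q (x / q) = (1 - x) * qPochhammer q x := by
  rw [← tprod_one_sub_pow_mul hq x, qPochhammer]
  congr! 3 with k
  rw [pow_succ]
  field_simp

end qPochhammer

noncomputable def thetaProduct (q y : ℂ) : ℂ :=
  (1 - y) * qPochhammer q y * qPochhammer q y⁻¹

section thetaProduct

variable {q : ℂ}

lemma thetaProduct_mul (hq : ‖q‖ < 1) (hq0 : q ≠ 0) {y : ℂ} (hy : y ≠ 0) :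
    thetaProduct q (q * y) = -y⁻¹ * thetaProduct q y := by
  have hinv : (q * y)⁻¹ = y⁻¹ / q := by field_simp
  rw [thetaProduct, hinv, qPochhammer_div hq hq0, thetaProduct,
    qPochhammer_eq_mul_qPochhammer_mul hq y]
  field_simp
  ring

lemma thetaProduct_inv {y : ℂ} (hy : y ≠ 0) :
    thetaProduct q y⁻¹ = -y⁻¹ * thetaProduct q y := by
  rw [thetaProduct, thetaProduct, inv_inv]
  field_simp
  ring

lemma thetaProduct_one : thetaProduct q 1 = 0 := by
  simp [thetaProduct]

lemma differentiableAt_thetaProduct (hq : ‖q‖ < 1) {y : ℂ} (hy : y ≠ 0) :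
    DifferentiableAt ℂ (thetaProduct q) y := by
  have hA := differentiable_qPochhammer hq
  exact (((differentiableAt_id.const_sub 1).mul (hA y)).mul
    ((hA _).comp y (differentiableAt_inv hy)))

lemma hasDerivAt_thetaProduct_one (hq : ‖q‖ < 1) :
    HasDerivAt (thetaProduct q) (-qPochhammer q 1 ^ 2) 1 := by
  have hA := differentiable_qPochhammer hq
  have hrest : HasDerivAt (fun y => qPochhammer q y * qPochhammer q y⁻¹)
      (deriv (fun y => qPochhammer q y * qPochhammer q y⁻¹) 1) 1 :=
    ((hA 1).mul ((hA _).comp 1 (differentiableAt_inv one_ne_zero))).hasDerivAt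
  have h := ((hasDerivAt_id (1 : ℂ)).const_sub 1).fun_mul hrest
  simp only [id, sub_self, zero_mul, inv_one] at h
  rw [show thetaProduct q = fun y => (1 - y) * (qPochhammer q y * qPochhammer q y⁻¹) from
    funext fun y => mul_assoc _ _ _]
  exact h.congr_deriv (by ring)

end thetaProduct

section theta

variable {τ : ℂ}

lemma norm_exp_two_pi_I_mul_lt_one (hτ : 0 < τ.im) : ‖exp (2 * π * I * τ)‖ < 1 := by
  rw [norm_exp, Real.exp_lt_one_iff]
  simpa using mul_pos Real.two_pi_pos hτ

lemma theta_eq_mul_thetaProduct (hτ : 0 < τ.im) (v : ℂ) :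
    theta v τ = I * exp (π * I * τ / 4) * qPochhammer (exp (2 * π * I * τ)) 1 *
      (exp (-(π * I * v)) * thetaProduct (exp (2 * π * I * τ)) (exp (2 * π * I * v))) := by
  have hq := norm_exp_two_pi_I_mul_lt_one hτ
  set q := exp (2 * π * I * τ)
  set y := exp (2 * π * I * v)
  have hsplit : ∏' k : ℕ, ((1 - q ^ (k + 1)) * (1 - q ^ k * y) * (1 - q ^ (k + 1) * y⁻¹)) =
      qPochhammer q 1 * thetaProduct q y := by
    rw [tprod_congr fun k => show (1 - q ^ (k + 1)) * (1 - q ^ k * y) * (1 - q ^ (k + 1) * y⁻¹)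
        = (1 - q ^ (k + 1) * 1) * (1 - q ^ k * y) * (1 - q ^ (k + 1) * y⁻¹) by ring,
      ((multipliable_one_sub_pow_succ_mul hq 1).mul (multipliable_one_sub_pow_mul hq y)).tprod_mul
        (multipliable_one_sub_pow_succ_mul hq y⁻¹),
      (multipliable_one_sub_pow_succ_mul hq 1).tprod_mul (multipliable_one_sub_pow_mul hq y),
      tprod_one_sub_pow_mul hq, thetaProduct]
    simp only [qPochhammer]
    ring
  rw [theta, exp_neg (2 * π * I * v), hsplit]
  ring

lemma theta_add_one (τ v : ℂ) : theta (v + 1) τ = -theta v τ := by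
  have hprefactor : exp (-(π * I * (v + 1))) = -exp (-(π * I * v)) := by
    rw [show -(π * I * (v + 1)) = -(π * I * v) - π * I by ring, exp_sub, exp_pi_mul_I,
      div_neg, div_one]
  have hy : exp (2 * π * I * (v + 1)) = exp (2 * π * I * v) := by
    rw [mul_add, mul_one, exp_add, exp_two_pi_mul_I, mul_one]
  have hy_inv : exp (-(2 * π * I * (v + 1))) = exp (-(2 * π * I * v)) := by
    rw [exp_neg, hy, ← exp_neg]
  simp only [theta, hprefactor, hy, hy_inv]
  ring

lemma theta_add_tau (hτ : 0 < τ.im) (v : ℂ) :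
    theta (v + τ) τ = -exp (-(π * I * τ)) * exp (-(2 * π * I * v)) * theta v τ := by
  have hq := norm_exp_two_pi_I_mul_lt_one hτ
  have hy : exp (2 * π * I * (v + τ)) = exp (2 * π * I * τ) * exp (2 * π * I * v) := by
    rw [mul_add, exp_add, mul_comm]
  have hprefactor : exp (-(π * I * (v + τ))) = exp (-(π * I * v)) * exp (-(π * I * τ)) := by
    rw [← exp_add]; ring_nf
  rw [theta_eq_mul_thetaProduct hτ, theta_eq_mul_thetaProduct hτ, hy,
    thetaProduct_mul hq (exp_ne_zero _) (exp_ne_zero _), hprefactor, exp_neg (2 * π * I * v)]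
  ring

lemma theta_neg (hτ : 0 < τ.im) (v : ℂ) : theta (-v) τ = -theta v τ := by
  have hy : exp (2 * π * I * v) = exp (π * I * v) ^ 2 := by
    rw [← exp_nat_mul]; ring_nf
  have hprefactor : exp (-(π * I * -v)) = exp (π * I * v) := by ring_nf
  have hy_neg : exp (2 * π * I * -v) = (exp (2 * π * I * v))⁻¹ := by
    rw [← exp_neg]; ring_nf
  rw [theta_eq_mul_thetaProduct hτ, theta_eq_mul_thetaProduct hτ, hprefactor, hy_neg,
    thetaProduct_inv (exp_ne_zero _), exp_neg, hy]
  field_simp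

lemma theta_zero (hτ : 0 < τ.im) : theta 0 τ = 0 := by
  simp [theta_eq_mul_thetaProduct hτ, thetaProduct_one]

lemma differentiable_theta (hτ : 0 < τ.im) : Differentiable ℂ (theta · τ) := by
  have hq := norm_exp_two_pi_I_mul_lt_one hτ
  rw [funext (theta_eq_mul_thetaProduct hτ)]
  intro v
  exact ((differentiableAt_id.const_mul _).neg.cexp.mul
    ((differentiableAt_thetaProduct hq (exp_ne_zero _)).comp (f := fun v => exp (2 * π * I * v)) v
      (differentiableAt_id.const_mul _).cexp)).const_mul _

lemma hasDerivAt_theta_zero (hτ : 0 < τ.im) :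
    HasDerivAt (theta · τ) (-(2 * π * I) *
      (I * exp (π * I * τ / 4) * qPochhammer (exp (2 * π * I * τ)) 1 ^ 3)) 0 := by
  have hq := norm_exp_two_pi_I_mul_lt_one hτ
  have hy : HasDerivAt (fun v : ℂ => exp (2 * π * I * v)) (2 * π * I) 0 := by
    simpa using ((hasDerivAt_id (0 : ℂ)).const_mul (2 * π * I)).cexp
  have hprod := (hasDerivAt_thetaProduct_one hq).comp_of_eq 0 hy (by simp)
  have hprefactor : HasDerivAt (fun v : ℂ => exp (-(π * I * v))) (-(π * I)) 0 := by
    simpa using ((hasDerivAt_id (0 : ℂ)).const_mul (π * I)).neg.cexp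
  rw [funext (theta_eq_mul_thetaProduct hτ)]
  have h := (hprefactor.fun_mul hprod).const_mul
    (I * exp (π * I * τ / 4) * qPochhammer (exp (2 * π * I * τ)) 1)
  simp only [Function.comp_def, mul_zero, neg_zero, exp_zero, thetaProduct_one] at h
  exact h.congr_deriv (by ring)

lemma Gfun_eq (hτ : 0 < τ.im) (v : ℂ) :
    Gfun v τ = exp (-(π * I * v)) * thetaProduct (exp (2 * π * I * τ)) (exp (2 * π * I * v)) /
      qPochhammer (exp (2 * π * I * τ)) 1 ^ 2 := by
  have hq := norm_exp_two_pi_I_mul_lt_one hτ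
  set q := exp (2 * π * I * τ)
  set y := exp (2 * π * I * v)
  have hB := multipliable_one_sub_pow_mul hq y
  have hA := multipliable_one_sub_pow_succ_mul hq y⁻¹
  have hden : ∏' k : ℕ, (1 - q ^ (k + 1) * 1) ^ 2 = qPochhammer q 1 ^ 2 :=
    (multipliable_one_sub_pow_succ_mul hq 1).tprod_pow 2
  rw [Gfun, tprod_congr fun k => show (1 - y * q ^ k) * (1 - y⁻¹ * q ^ (k + 1)) /
      (1 - q ^ (k + 1)) ^ 2 = (1 - q ^ k * y) * (1 - q ^ (k + 1) * y⁻¹) /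
      (1 - q ^ (k + 1) * 1) ^ 2 by ring,
    (hB.mul hA).tprod_div₀ ((multipliable_one_sub_pow_succ_mul hq 1).pow 2)
      (hden ▸ pow_ne_zero 2 (qPochhammer_one_ne_zero hq)),
    hden, hB.tprod_mul hA, tprod_one_sub_pow_mul hq, thetaProduct]
  simp only [qPochhammer]
  ring

lemma deriv_theta_zero_ne_zero (hτ : 0 < τ.im) : deriv (theta · τ) 0 ≠ 0 := by
  rw [(hasDerivAt_theta_zero hτ).deriv]
  have := qPochhammer_one_ne_zero (norm_exp_two_pi_I_mul_lt_one hτ)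
  have := Real.pi_ne_zero
  simp_all [exp_ne_zero]

lemma Gfun_mul_deriv_theta_zero (hτ : 0 < τ.im) (v : ℂ) :
    Gfun v τ * deriv (theta · τ) 0 = -(2 * π * I) * theta v τ := by
  have := qPochhammer_one_ne_zero (norm_exp_two_pi_I_mul_lt_one hτ)
  rw [(hasDerivAt_theta_zero hτ).deriv, Gfun_eq hτ, theta_eq_mul_thetaProduct hτ]
  field_simp

lemma theta_add_nat (τ : ℂ) (n : ℕ) (v : ℂ) : theta (v + n) τ = (-1) ^ n * theta v τ := by
  induction n with
  | zero => simp
  | succ n ih => rw [Nat.cast_succ, ← add_assoc, theta_add_one, ih]; ring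

lemma theta_add_nat_mul_tau (hτ : 0 < τ.im) (n : ℕ) (v : ℂ) :
    theta (v + n * τ) τ =
      (-1) ^ n * exp (-(π * I * n ^ 2 * τ)) * exp (-(2 * π * I * n * v)) * theta v τ := by
  induction n with
  | zero => simp
  | succ n ih =>
    have hexp : exp (-(π * I * τ)) * exp (-(2 * π * I * (v + n * τ))) *
        (exp (-(π * I * n ^ 2 * τ)) * exp (-(2 * π * I * n * v))) =
        exp (-(π * I * (n + 1) ^ 2 * τ)) * exp (-(2 * π * I * (n + 1) * v)) := by
      simp only [← exp_add]; ring_nf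
    rw [Nat.cast_succ, add_mul, one_mul, ← add_assoc, theta_add_tau hτ, ih]
    linear_combination (-(-1) ^ n * theta v τ) * hexp

lemma theta_add_nat_add_nat_mul_tau (hτ : 0 < τ.im) (a b : ℕ) (v : ℂ) :
    theta (v + a + b * τ) τ =
      (-1) ^ (a + b) * exp (-(π * I * b ^ 2 * τ)) * exp (-(2 * π * I * b * v)) * theta v τ := by
  rw [add_right_comm, theta_add_nat, theta_add_nat_mul_tau hτ]
  ring

lemma hasDerivAt_theta_nat_add_nat_mul_tau (hτ : 0 < τ.im) (a b : ℕ) :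
    HasDerivAt (theta · τ)
      ((-1) ^ (a + b) * exp (-(π * I * b ^ 2 * τ)) * deriv (theta · τ) 0) (a + b * τ) := by
  set c : ℂ := (-1) ^ (a + b) * exp (-(π * I * b ^ 2 * τ))
  -- Differentiate the quasi-periodicity relation at `0`: as `θ(0) = 0`, the derivative of the
  -- exponential factor drops out.
  have hexp : HasDerivAt (fun w : ℂ => exp (-(2 * π * I * b * w))) (-(2 * π * I * b)) 0 := by
    simpa using ((hasDerivAt_id (0 : ℂ)).const_mul (2 * π * I * b)).neg.cexp
  have h0 := (hexp.fun_mul (differentiable_theta hτ 0).hasDerivAt).const_mul c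
  have hshifted := HasDerivAt.comp_sub_const (a + b * τ : ℂ) (a + b * τ) (by rwa [sub_self])
  simp only [mul_zero, neg_zero, exp_zero, theta_zero hτ, one_mul, zero_add] at hshifted
  refine hshifted.congr_of_eventuallyEq (.of_forall fun w => ?_)
  dsimp only [c]
  rw [← mul_assoc, ← theta_add_nat_add_nat_mul_tau hτ, add_assoc, sub_add_cancel]

end theta

theorem residue_at_pole_general
    (τ : ℂ) (hτ : 0 < τ.im) (v : ℂ) (m N : ℕ) (hm : 1 ≤ m)
    (a b : ℕ) :
    let z₀ : ℂ := (-v + a + b * τ) / m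
    theta z₀ τ ≠ 0 → theta (v + z₀) τ ≠ 0 →
      ∀ᶠ ε in nhdsWithin (0 : ℝ) (Set.Ioi 0),
        (∮ z in C(z₀, ε),
            theta ((m : ℂ) * z) τ / theta (v + (m : ℂ) * z) τ *
              (theta (v + z) τ / theta z τ) ^ N) =
          exp (2 * (Real.pi : ℂ) * I * (b : ℂ) * v) / m * Gfun v τ *
            (theta (v + z₀) τ / theta z₀ τ) ^ N := by
  intro z₀ hθz₀ _
  have hm0 : (m : ℂ) ≠ 0 := Nat.cast_ne_zero.2 (by omega)
  have hpole : v + m * z₀ = a + b * τ := by simp only [z₀]; field_simp; ring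
  have hθ := differentiable_theta hτ
  set c : ℂ := (-1) ^ (a + b) * exp (-(π * I * b ^ 2 * τ)) with hc_def
  have hc : c ≠ 0 := mul_ne_zero (pow_ne_zero _ (by norm_num)) (exp_ne_zero _)
  have hnum : theta (m * z₀) τ = -(c * exp (2 * π * I * b * v) * theta v τ) := by
    rw [show (m : ℂ) * z₀ = -v + a + b * τ by simp only [z₀]; field_simp,
      theta_add_nat_add_nat_mul_tau hτ, theta_neg hτ, hc_def]
    simp only [mul_neg, neg_neg]
  have hzero : theta (v + m * z₀) τ = 0 := by
    simpa [hpole, theta_zero hτ] using theta_add_nat_add_nat_mul_tau hτ a b 0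
  have hderiv : HasDerivAt (fun z => theta (v + m * z) τ) (c * deriv (theta · τ) 0 * m) z₀ :=
    (hasDerivAt_theta_nat_add_nat_mul_tau hτ a b).comp_of_eq z₀
      (((hasDerivAt_id z₀).const_mul (m : ℂ)).const_add v |>.congr_deriv (mul_one _)) hpole.symm
  have hquot : ∀ᶠ z in 𝓝 z₀, DifferentiableAt ℂ
      (fun z => theta (m * z) τ * (theta (v + z) τ / theta z τ) ^ N) z := by
    filter_upwards [(hθ z₀).continuousAt.eventually_ne hθz₀] with z hz
    exact ((hθ _).comp z (by fun_prop)).mul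
      (((hθ _).comp z (by fun_prop)).div (hθ z) hz |>.pow N)
  have hres := eventually_circleIntegral_div_eq_of_hasDerivAt
    (f := fun z => theta (v + m * z) τ) (.of_forall fun z => (hθ _).comp z (by fun_prop))
    hquot hzero hderiv (mul_ne_zero (mul_ne_zero hc (deriv_theta_zero_ne_zero hτ)) hm0)
  filter_upwards [hres] with ε hε
  simp only [div_mul_eq_mul_div]
  rw [hε, hnum,
    eq_div_of_mul_eq (deriv_theta_zero_ne_zero hτ) (Gfun_mul_deriv_theta_zero hτ v)]
  field_simp

/-- Lemma 6.3: the contour integral of `θ(mz,τ)/θ(v+mz,τ)·(θ(v+z,τ)/θ(z,τ))^N`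
around the simple pole `z₀ = (−v+a+bτ)/m` equals
`(e^{2πibv}/m)·G(y,q)·(θ(v+z₀,τ)/θ(z₀,τ))^N`. -/
theorem residue_at_pole
    (τ : ℂ) (hτ : 0 < τ.im) (v : ℂ) (m N : ℕ) (hm : 1 ≤ m) (hN : 1 ≤ N)
    (a b : ℕ) (ha : a < m) (hb : b < m) :
    let z₀ : ℂ := (-v + a + b * τ) / m
    theta z₀ τ ≠ 0 → theta (v + z₀) τ ≠ 0 →
      ∀ᶠ ε in nhdsWithin (0 : ℝ) (Set.Ioi 0),
        (∮ z in C(z₀, ε),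
            theta ((m : ℂ) * z) τ / theta (v + (m : ℂ) * z) τ *
              (theta (v + z) τ / theta z τ) ^ N) =
          exp (2 * (Real.pi : ℂ) * I * (b : ℂ) * v) / m * Gfun v τ *
            (theta (v + z₀) τ / theta z₀ τ) ^ N :=
  residue_at_pole_general τ hτ v m N hm a b
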